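/- arXiv:2512.04006 — 2 statements merged into one kernel-verified Lean document; each statement's English description precedes it below -/
import Mathlib

section
/- Let K = 2^m for a natural number m ≥ 1 and define the energy E(a) = log(1 + Σ_{j=1}^{K−1} exp(−(Ψa)_j)). If a : [0, ∞) → ℝ^{K−1} is a solution of the reduced cross-entropy gradient flow da_i/dt = a_i b_i(a)/D(a) with a_i(0) > 0 for all i, then d/dt E(a(t)) = −Σ_i a_i(t)·(b_i(a(t))/D(a(t)))² ≤ 0; in particular t ↦ E(a(t)) is nonincreasing. -/
open Matrix Finset

noncomputable section

/-- The Sylvester Hadamard matrix `Φ_{2^m}`, defined recursively by `Φ₁ = (1)` and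
`Φ_{2^{m+1}} = [[Φ_{2^m}, Φ_{2^m}], [Φ_{2^m}, -Φ_{2^m}]]`. -/
def sylvester : (m : ℕ) → Matrix (Fin (2 ^ m)) (Fin (2 ^ m)) ℝ
  | 0 => Matrix.of fun _ _ => 1
  | m + 1 => Matrix.of fun i j =>
      (if 2 ^ m ≤ i.val ∧ 2 ^ m ≤ j.val then -1 else 1) *
        sylvester m ⟨i.val % 2 ^ m, Nat.mod_lt _ (Nat.two_pow_pos m)⟩
          ⟨j.val % 2 ^ m, Nat.mod_lt _ (Nat.two_pow_pos m)⟩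

/-- The core `X = Φ[2:K, 2:K]` obtained by deleting the first row and column of `Φ`. -/
def hadCore (m : ℕ) : Matrix (Fin (2 ^ m - 1)) (Fin (2 ^ m - 1)) ℝ :=
  Matrix.of fun i j =>
    sylvester m ⟨i.val + 1, by have h1 := Nat.two_pow_pos m; have h2 := i.isLt; omega⟩
      ⟨j.val + 1, by have h1 := Nat.two_pow_pos m; have h2 := j.isLt; omega⟩

/-- `Ψ = 1 1ᵀ − X`. -/
def PsiM (m : ℕ) : Matrix (Fin (2 ^ m - 1)) (Fin (2 ^ m - 1)) ℝ :=
  Matrix.of fun i j => 1 - hadCore m i j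

/-- `b_i(a) = Σ_j Ψ_{ij} exp(−(Ψa)_j)`. -/
def bVec (m : ℕ) (a : Fin (2 ^ m - 1) → ℝ) (i : Fin (2 ^ m - 1)) : ℝ :=
  ∑ j, PsiM m i j * Real.exp (-((PsiM m).mulVec a j))

/-- `D(a) = 1 + Σ_j exp(−(Ψa)_j)`. -/
def Dden (m : ℕ) (a : Fin (2 ^ m - 1) → ℝ) : ℝ :=
  1 + ∑ j, Real.exp (-((PsiM m).mulVec a j))

/-- The energy `E(a) = log(1 + Σ_j exp(−(Ψa)_j))`. -/
def energyE (m : ℕ) (a : Fin (2 ^ m - 1) → ℝ) : ℝ :=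
  Real.log (1 + ∑ j, Real.exp (-((PsiM m).mulVec a j)))

/-- `b̄(a) = Σ_j â_j b_j(a)` with `â = a / ‖a‖₁`. -/
def bbar (m : ℕ) (a : Fin (2 ^ m - 1) → ℝ) : ℝ :=
  ∑ j, (a j / ∑ k, a k) * bVec m a j

/-- `M(a) = (1/2) Σ_i (â_i − 1/(K−1))²`. -/
def Mmetric (m : ℕ) (a : Fin (2 ^ m - 1) → ℝ) : ℝ :=
  (1 / 2) * ∑ i, (a i / (∑ k, a k) - 1 / ((2 : ℝ) ^ m - 1)) ^ 2

/-!
Along the flow, the chain rule and the symmetry of `Ψ` give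
`dE/dt = −⟨ȧ, b⟩ / D = −Σ_i a_i (b_i / D)²`, which is `≤ 0` as long as the `a_i` stay positive.
They do: `a_i` solves the linear equation `ȧ_i = (b_i / D) a_i`, so
`a_i(t) = a_i(0) exp (∫₀ᵗ b_i / D) > 0`.
-/

lemma sylvester_isSymm (m : ℕ) : (sylvester m).IsSymm := by
  induction m with
  | zero => rfl
  | succ m ih =>
    refine IsSymm.ext fun i j => ?_
    simp only [sylvester, of_apply, and_comm]
    rw [ih.apply]

lemma PsiM_isSymm (m : ℕ) : (PsiM m).IsSymm :=
  IsSymm.ext fun i j => by simp only [PsiM, hadCore, of_apply, (sylvester_isSymm m).apply]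

theorem HasDerivAt.const_mulVec {n p : Type*} [Fintype n] [Fintype p] (A : Matrix n p ℝ)
    {γ : ℝ → p → ℝ} {v : p → ℝ} {t : ℝ} (hγ : HasDerivAt γ v t) :
    HasDerivAt (fun s => A *ᵥ γ s) (A *ᵥ v) t :=
  (Matrix.mulVecLin A).toContinuousLinearMap.hasFDerivAt.comp_hasDerivAt t hγ

def expWeight (m : ℕ) (x : Fin (2 ^ m - 1) → ℝ) (j : Fin (2 ^ m - 1)) : ℝ :=
  Real.exp (-(PsiM m *ᵥ x) j)

lemma bVec_eq_mulVec (m : ℕ) (x : Fin (2 ^ m - 1) → ℝ) : bVec m x = PsiM m *ᵥ expWeight m x :=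
  rfl

lemma Dden_eq (m : ℕ) (x : Fin (2 ^ m - 1) → ℝ) : Dden m x = 1 + ∑ j, expWeight m x j :=
  rfl

lemma energyE_eq_log_Dden (m : ℕ) (x : Fin (2 ^ m - 1) → ℝ) :
    energyE m x = Real.log (Dden m x) :=
  rfl

lemma Dden_pos (m : ℕ) (x : Fin (2 ^ m - 1) → ℝ) : 0 < Dden m x := by
  rw [Dden_eq]
  have : 0 ≤ ∑ j, expWeight m x j := sum_nonneg fun j _ => (Real.exp_pos _).le
  linarith

lemma continuous_bVec (m : ℕ) : Continuous (bVec m) := by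
  unfold bVec
  fun_prop

lemma continuous_Dden (m : ℕ) : Continuous (Dden m) := by
  unfold Dden
  fun_prop

section Path

variable {m : ℕ} {γ : ℝ → Fin (2 ^ m - 1) → ℝ} {v : Fin (2 ^ m - 1) → ℝ} {t : ℝ}

lemma hasDerivAt_expWeight_comp (hγ : HasDerivAt γ v t) :
    HasDerivAt (fun s => expWeight m (γ s)) (-(expWeight m (γ t) * (PsiM m *ᵥ v))) t :=
  hasDerivAt_pi.2 fun j => by
    simpa [expWeight, mul_comm] using (hasDerivAt_pi.1 (hγ.const_mulVec (PsiM m)) j).neg.exp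

/-- With `w = expWeight m (γ t)`, the symmetry of `Ψ` turns `−⟨w, Ψγ'⟩` into
`−⟨γ', Ψw⟩ = −⟨γ', b⟩`. -/
lemma hasDerivAt_Dden_comp (hγ : HasDerivAt γ v t) :
    HasDerivAt (fun s => Dden m (γ s)) (-(v ⬝ᵥ bVec m (γ t))) t := by
  have hw := hasDerivAt_pi.1 (hasDerivAt_expWeight_comp hγ)
  have hsum := (HasDerivAt.fun_sum fun j (_ : j ∈ univ) => hw j).const_add 1
  simp only [← Dden_eq] at hsum
  refine hsum.congr_deriv ?_
  rw [bVec_eq_mulVec, dotProduct_mulVec, ← vecMul_transpose, (PsiM_isSymm m).eq, dotProduct_comm]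
  simp [dotProduct]

lemma hasDerivAt_energyE_comp (hγ : HasDerivAt γ v t) :
    HasDerivAt (fun s => energyE m (γ s)) (-(v ⬝ᵥ bVec m (γ t)) / Dden m (γ t)) t := by
  simpa only [energyE_eq_log_Dden, neg_div] using (hasDerivAt_Dden_comp hγ).log (Dden_pos m _).ne'

end Path

/-- `x · exp (−G)` has derivative zero. -/
lemma eq_mul_exp_of_hasDerivAt_mul {x g G : ℝ → ℝ} (hG : ∀ t ≥ 0, HasDerivAt G (g t) t)
    (hx : ∀ t ≥ 0, HasDerivAt x (x t * g t) t) {t : ℝ} (ht : 0 ≤ t) :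
    x t = x 0 * Real.exp (G t - G 0) := by
  have hconst : ∀ s ∈ Set.Icc 0 t, x s * Real.exp (-G s) = x 0 * Real.exp (-G 0) := by
    refine constant_of_has_deriv_right_zero (fun s hs => ?_) fun s hs => ?_
    · exact ((hx s hs.1).continuousAt.mul (hG s hs.1).neg.exp.continuousAt).continuousWithinAt
    · refine ((hx s hs.1).mul (hG s hs.1).neg.exp).hasDerivWithinAt.congr_deriv ?_
      ring
  have := hconst t ⟨ht, le_rfl⟩
  rw [Real.exp_neg, Real.exp_neg, ← div_eq_mul_inv, ← div_eq_mul_inv,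
    div_eq_iff (Real.exp_pos _).ne'] at this
  rw [this, Real.exp_sub]
  ring

lemma pos_of_hasDerivAt_mul {x g : ℝ → ℝ} (hg : ContinuousOn g (Set.Ici 0))
    (hx : ∀ t ≥ 0, HasDerivAt x (x t * g t) t) (h0 : 0 < x 0) {t : ℝ} (ht : 0 ≤ t) :
    0 < x t := by
  set g' : ℝ → ℝ := fun s => g (max s 0)
  have hg' : Continuous g' :=
    hg.comp_continuous (continuous_id.max continuous_const) fun s => le_max_right s 0
  have hx' : ∀ t ≥ 0, HasDerivAt x (x t * g' t) t := fun t ht => by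
    simpa only [g', max_eq_left ht] using hx t ht
  rw [eq_mul_exp_of_hasDerivAt_mul (fun u _ => (hg'.integral_hasStrictDerivAt 0 u).hasDerivAt)
    hx' ht]
  positivity

lemma flow_pos {m : ℕ} {a : ℝ → Fin (2 ^ m - 1) → ℝ}
    (hflow : ∀ t ≥ (0 : ℝ), ∀ i, HasDerivAt (fun s => a s i)
        (a t i * bVec m (a t) i / Dden m (a t)) t)
    (hpos : ∀ i, 0 < a 0 i) {t : ℝ} (ht : 0 ≤ t) (i : Fin (2 ^ m - 1)) : 0 < a t i := by
  have ha : ContinuousOn a (Set.Ici 0) := fun s hs =>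
    (continuousAt_pi.2 fun j => (hflow s hs j).continuousAt).continuousWithinAt
  have hrate : ContinuousOn (fun s => bVec m (a s) i / Dden m (a s)) (Set.Ici 0) :=
    (((continuous_apply i).comp (continuous_bVec m)).comp_continuousOn ha).div
      ((continuous_Dden m).comp_continuousOn ha) fun s _ => (Dden_pos m _).ne'
  refine pos_of_hasDerivAt_mul (x := fun s => a s i) hrate (fun s hs => ?_) (hpos i) ht
  simpa only [mul_div_assoc] using hflow s hs i

theorem energy_nonincreasing_along_flow_general (m : ℕ)
    (a : ℝ → Fin (2 ^ m - 1) → ℝ)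
    (hflow : ∀ t ≥ (0 : ℝ), ∀ i, HasDerivAt (fun s => a s i)
        (a t i * bVec m (a t) i / Dden m (a t)) t)
    (hpos : ∀ i, 0 < a 0 i) :
    (∀ t ≥ (0 : ℝ),
      HasDerivAt (fun s => energyE m (a s))
        (-(∑ i, a t i * (bVec m (a t) i / Dden m (a t)) ^ 2)) t ∧
      -(∑ i, a t i * (bVec m (a t) i / Dden m (a t)) ^ 2) ≤ 0) ∧
    AntitoneOn (fun t => energyE m (a t)) (Set.Ici (0 : ℝ)) := by
  have henergy : ∀ t ≥ (0 : ℝ), HasDerivAt (fun s => energyE m (a s))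
      (-(∑ i, a t i * (bVec m (a t) i / Dden m (a t)) ^ 2)) t := fun t ht => by
    refine (hasDerivAt_energyE_comp (hasDerivAt_pi.2 (hflow t ht))).congr_deriv ?_
    simp only [dotProduct, neg_div, sum_div]
    exact congrArg _ (sum_congr rfl fun i _ => by ring)
  have hdissipation : ∀ t ≥ (0 : ℝ),
      -(∑ i, a t i * (bVec m (a t) i / Dden m (a t)) ^ 2) ≤ 0 := fun t ht =>
    neg_nonpos.2 (sum_nonneg fun i _ => mul_nonneg (flow_pos hflow hpos ht i).le (sq_nonneg _))
  refine ⟨fun t ht => ⟨henergy t ht, hdissipation t ht⟩,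
    antitoneOn_of_hasDerivWithinAt_nonpos (convex_Ici 0)
      (f' := fun t => -(∑ i, a t i * (bVec m (a t) i / Dden m (a t)) ^ 2))
      (fun t ht => (henergy t ht).continuousAt.continuousWithinAt) ?_ ?_⟩
  all_goals
    rw [interior_Ici]
    intro t ht
  · exact (henergy t ht.le).hasDerivWithinAt
  · exact hdissipation t ht.le

/-- energy dissipation along the flow.
If `a : [0,∞) → ℝ^{K−1}` solves the reduced cross-entropy gradient flow
`da_i/dt = a_i b_i(a)/D(a)` with `a_i(0) > 0`, then
`d/dt E(a(t)) = −Σ_i a_i(t) (b_i(a(t))/D(a(t)))² ≤ 0`, so `t ↦ E(a(t))` is nonincreasing. -/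
theorem energy_nonincreasing_along_flow (m : ℕ) (hm : 1 ≤ m)
    (a : ℝ → Fin (2 ^ m - 1) → ℝ)
    (hflow : ∀ t ≥ (0 : ℝ), ∀ i, HasDerivAt (fun s => a s i)
        (a t i * bVec m (a t) i / Dden m (a t)) t)
    (hpos : ∀ i, 0 < a 0 i) :
    (∀ t ≥ (0 : ℝ),
      HasDerivAt (fun s => energyE m (a s))
        (-(∑ i, a t i * (bVec m (a t) i / Dden m (a t)) ^ 2)) t ∧
      -(∑ i, a t i * (bVec m (a t) i / Dden m (a t)) ^ 2) ≤ 0) ∧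
    AntitoneOn (fun t => energyE m (a t)) (Set.Ici (0 : ℝ)) :=
  energy_nonincreasing_along_flow_general m a hflow hpos
end
end

section
/- Let K = 2^m for a natural number m ≥ 1 and let a ∈ ℝ^{K−1} have all entries positive. If the vector b(a) is a constant vector, i.e., b_i(a) = b_j(a) for all i, j (equivalently Ψ·exp(−Ψa) is proportional to 1_{K−1}), then a is proportional to 1_{K−1}; hence the only full-rank stable direction of the normalized dynamics is the uniform vector â = (1/(K−1))·1_{K−1}. -/
open Matrix Finset

noncomputable section

/-! Expanding `Φ² = K • 1` along the first index (where `Φ` has entries `1`) shows that the core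
`X` has all row and column sums `-1` and `X² = K • 1 - J`, so `Ψ = J - X` has row sums `K` and
`Ψ² = K • (1 + J)`. Hence if `Ψ v` is constant, applying `Ψ` once more gives
`K • (v + ∑ v) = K • Ψ v`, so `v` is constant. This is used twice: `b(a) = Ψ exp(-Ψa)` constant
makes `exp(-Ψa)`, hence `Ψa`, constant, which makes `a` constant. `Φ² = K • 1` itself follows
from `Φ_{2K} = H₂ ⊗ Φ_K` by the mixed-product property. -/

open scoped Kronecker

lemma sylvester_apply_zero_left (m : ℕ) (j : Fin (2 ^ m)) : sylvester m 0 j = 1 := by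
  induction m with
  | zero => rfl
  | succ m ih => simpa [sylvester] using ih _

lemma sylvester_apply_zero_right (m : ℕ) (i : Fin (2 ^ m)) : sylvester m i 0 = 1 := by
  induction m with
  | zero => rfl
  | succ m ih => simpa [sylvester] using ih _

/-- `(b, r) ↦ 2 ^ m * b + r`: `b` selects the block of the recursive definition of `sylvester`. -/
def sylvesterIndexEquiv (m : ℕ) : Fin 2 × Fin (2 ^ m) ≃ Fin (2 ^ (m + 1)) :=
  finProdFinEquiv.trans (finCongr (by ring))

lemma sylvester_succ_apply_sylvesterIndexEquiv (m : ℕ) (b c : Fin 2) (r s : Fin (2 ^ m)) :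
    sylvester (m + 1) (sylvesterIndexEquiv m (b, r)) (sylvesterIndexEquiv m (c, s)) =
      !![1, 1; 1, -1] b c * sylvester m r s := by
  have hr := r.isLt
  have hs := s.isLt
  fin_cases b <;> fin_cases c <;>
    simp [sylvester, sylvesterIndexEquiv, finProdFinEquiv, Nat.mod_eq_of_lt, hr, hs]

lemma sylvester_succ (m : ℕ) :
    sylvester (m + 1) = (!![1, 1; 1, -1] ⊗ₖ sylvester m).submatrix
      (sylvesterIndexEquiv m).symm (sylvesterIndexEquiv m).symm := by
  ext i j
  obtain ⟨⟨b, r⟩, rfl⟩ := (sylvesterIndexEquiv m).surjective i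
  obtain ⟨⟨c, s⟩, rfl⟩ := (sylvesterIndexEquiv m).surjective j
  simp [sylvester_succ_apply_sylvesterIndexEquiv]

lemma sylvester_mul_self (m : ℕ) : sylvester m * sylvester m = (2 ^ m : ℝ) • 1 := by
  induction m with
  | zero => ext i j; fin_cases i; fin_cases j; simp [sylvester, mul_apply]
  | succ m ih =>
    have hH : !![(1 : ℝ), 1; 1, -1] * !![1, 1; 1, -1] = (2 : ℝ) • 1 := by
      ext i j; fin_cases i <;> fin_cases j <;> norm_num
    rw [sylvester_succ, submatrix_mul_equiv, ← mul_kronecker_mul, hH, ih, smul_kronecker,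
      kronecker_smul, one_kronecker_one, smul_smul, ← pow_succ']
    ext i j
    simp [one_apply]

def allOnes (ι : Type*) : Matrix ι ι ℝ := of fun _ _ => 1

section NormalizedCore

variable {n : ℕ} {H : Matrix (Fin (n + 1)) (Fin (n + 1)) ℝ} {c : ℝ}

lemma submatrix_succ_row_sum (hH : H * H = c • 1) (hcol : ∀ i, H i 0 = 1) (i : Fin n) :
    ∑ j, H.submatrix Fin.succ Fin.succ i j = -1 := by
  have h := congrFun (congrFun hH i.succ) 0
  simp only [mul_apply, Fin.sum_univ_succ, hcol, Matrix.smul_apply,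
    one_apply_ne (Fin.succ_ne_zero i), mul_one, smul_zero] at h
  simp only [submatrix_apply]
  linarith

lemma submatrix_succ_col_sum (hH : H * H = c • 1) (hrow : ∀ j, H 0 j = 1) (j : Fin n) :
    ∑ i, H.submatrix Fin.succ Fin.succ i j = -1 := by
  have h := congrFun (congrFun hH 0) j.succ
  simp only [mul_apply, Fin.sum_univ_succ, hrow, Matrix.smul_apply,
    one_apply_ne (Fin.succ_ne_zero j).symm, one_mul, smul_zero] at h
  simp only [submatrix_apply]
  linarith

lemma submatrix_succ_mul_self (hH : H * H = c • 1) (hrow : ∀ j, H 0 j = 1)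
    (hcol : ∀ i, H i 0 = 1) :
    H.submatrix Fin.succ Fin.succ * H.submatrix Fin.succ Fin.succ = c • 1 - allOnes (Fin n) := by
  ext i j
  have h := congrFun (congrFun hH i.succ) j.succ
  simp only [mul_apply, Fin.sum_univ_succ, hrow, hcol, Matrix.smul_apply, one_apply,
    Fin.succ_inj, mul_one] at h
  simp only [mul_apply, submatrix_apply, Matrix.sub_apply, Matrix.smul_apply, one_apply, allOnes,
    of_apply]
  linarith

end NormalizedCore

section AllOnesSub

variable {ι : Type*} [Fintype ι] {X : Matrix ι ι ℝ}

lemma allOnes_sub_row_sum (hrow : ∀ i, ∑ j, X i j = -1) (i : ι) :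
    ∑ j, (allOnes ι - X) i j = Fintype.card ι + 1 := by
  simp [allOnes, sum_sub_distrib, hrow]

lemma allOnes_sub_mul_self [DecidableEq ι] {c : ℝ} (hrow : ∀ i, ∑ j, X i j = -1)
    (hcol : ∀ j, ∑ i, X i j = -1) (hsq : X * X = c • 1 - allOnes ι) :
    (allOnes ι - X) * (allOnes ι - X) = c • 1 + (Fintype.card ι + 1 : ℝ) • allOnes ι := by
  ext i j
  have h := congrFun (congrFun hsq i) j
  simp only [mul_apply, Matrix.sub_apply, Matrix.smul_apply, Matrix.add_apply, allOnes,
    of_apply] at h ⊢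
  simp only [sub_mul, mul_sub, one_mul, mul_one, sum_sub_distrib, h, hrow, hcol, sum_const,
    card_univ, nsmul_eq_mul, smul_eq_mul]
  ring

lemma pairwise_eq_of_mulVec_pairwise_eq [DecidableEq ι] {P : Matrix ι ι ℝ} {c d r : ℝ}
    (hc : c ≠ 0) (hsq : P * P = c • 1 + d • allOnes ι) (hrow : ∀ i, ∑ j, P i j = r) {v : ι → ℝ}
    (hv : ∀ i j, (P *ᵥ v) i = (P *ᵥ v) j) (i j : ι) : v i = v j := by
  have key : ∀ i, c * v i + d * ∑ k, v k = r * (P *ᵥ v) i := by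
    intro i
    calc c * v i + d * ∑ k, v k = (P *ᵥ (P *ᵥ v)) i := by
          rw [mulVec_mulVec, hsq, add_mulVec, smul_mulVec, smul_mulVec, one_mulVec]
          simp [allOnes, mulVec, dotProduct]
      _ = r * (P *ᵥ v) i := by
          simp only [mulVec, dotProduct] at hv ⊢
          rw [← hrow i, sum_mul]
          exact sum_congr rfl fun k _ => by rw [hv k i]
  have hi := key i
  have hj := key j
  rw [hv i j] at hi
  exact mul_left_cancel₀ hc (by linarith)

end AllOnesSub

lemma two_pow_sub_one_add_one (m : ℕ) : 2 ^ m - 1 + 1 = 2 ^ m :=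
  Nat.sub_add_cancel Nat.one_le_two_pow

lemma card_fin_two_pow_sub_one (m : ℕ) : (Fintype.card (Fin (2 ^ m - 1)) : ℝ) = 2 ^ m - 1 := by
  rw [Fintype.card_fin, Nat.cast_sub Nat.one_le_two_pow]
  norm_num

lemma hadCore_eq_submatrix (m : ℕ) :
    hadCore m = ((sylvester m).submatrix (finCongr (two_pow_sub_one_add_one m))
      (finCongr (two_pow_sub_one_add_one m))).submatrix Fin.succ Fin.succ :=
  rfl

lemma sylvester_submatrix_finCongr_mul_self (m : ℕ) :
    (sylvester m).submatrix (finCongr (two_pow_sub_one_add_one m))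
        (finCongr (two_pow_sub_one_add_one m)) *
      (sylvester m).submatrix (finCongr (two_pow_sub_one_add_one m))
        (finCongr (two_pow_sub_one_add_one m)) = (2 ^ m : ℝ) • 1 := by
  rw [submatrix_mul_equiv, sylvester_mul_self]
  ext i j
  simp [one_apply]

lemma hadCore_row_sum (m : ℕ) (i : Fin (2 ^ m - 1)) : ∑ j, hadCore m i j = -1 := by
  rw [hadCore_eq_submatrix]
  exact submatrix_succ_row_sum (sylvester_submatrix_finCongr_mul_self m)
    (fun _ => sylvester_apply_zero_right m _) i

lemma hadCore_col_sum (m : ℕ) (j : Fin (2 ^ m - 1)) : ∑ i, hadCore m i j = -1 := by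
  rw [hadCore_eq_submatrix]
  exact submatrix_succ_col_sum (sylvester_submatrix_finCongr_mul_self m)
    (fun _ => sylvester_apply_zero_left m _) j

lemma hadCore_mul_self (m : ℕ) :
    hadCore m * hadCore m = (2 ^ m : ℝ) • 1 - allOnes (Fin (2 ^ m - 1)) := by
  rw [hadCore_eq_submatrix]
  exact submatrix_succ_mul_self (sylvester_submatrix_finCongr_mul_self m)
    (fun _ => sylvester_apply_zero_left m _) (fun _ => sylvester_apply_zero_right m _)

lemma PsiM_eq_allOnes_sub_hadCore (m : ℕ) : PsiM m = allOnes _ - hadCore m :=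
  rfl

lemma PsiM_row_sum (m : ℕ) (i : Fin (2 ^ m - 1)) : ∑ j, PsiM m i j = 2 ^ m := by
  rw [PsiM_eq_allOnes_sub_hadCore, allOnes_sub_row_sum (hadCore_row_sum m),
    card_fin_two_pow_sub_one]
  ring

lemma PsiM_mul_self (m : ℕ) :
    PsiM m * PsiM m = (2 ^ m : ℝ) • 1 + (2 ^ m : ℝ) • allOnes (Fin (2 ^ m - 1)) := by
  rw [PsiM_eq_allOnes_sub_hadCore,
    allOnes_sub_mul_self (hadCore_row_sum m) (hadCore_col_sum m) (hadCore_mul_self m),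
    card_fin_two_pow_sub_one, sub_add_cancel]

lemma pairwise_eq_of_PsiM_mulVec_pairwise_eq (m : ℕ) {v : Fin (2 ^ m - 1) → ℝ}
    (hv : ∀ i j, (PsiM m *ᵥ v) i = (PsiM m *ᵥ v) j) (i j : Fin (2 ^ m - 1)) : v i = v j :=
  pairwise_eq_of_mulVec_pairwise_eq (by positivity) (PsiM_mul_self m) (PsiM_row_sum m) hv i j

lemma div_sum_of_pairwise_eq {ι : Type*} [Fintype ι] {a : ι → ℝ} (ha : ∀ i j, a i = a j) (i : ι)
    (hi : a i ≠ 0) : a i / ∑ j, a j = 1 / Fintype.card ι := by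
  rw [sum_congr rfl fun j _ => ha j i, sum_const, card_univ, nsmul_eq_mul,
    div_mul_cancel_right₀ hi, one_div]

lemma bVec_eq_PsiM_mulVec (m : ℕ) (a : Fin (2 ^ m - 1) → ℝ) :
    bVec m a = PsiM m *ᵥ fun j => Real.exp (-(PsiM m *ᵥ a) j) :=
  rfl

theorem full_rank_stable_direction_is_uniform_general (m : ℕ)
    (a : Fin (2 ^ m - 1) → ℝ) (hpos : ∀ i, 0 < a i)
    (hconst : ∀ i j, bVec m a i = bVec m a j) :
    (∃ c : ℝ, ∀ i, a i = c) ∧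
    (∀ i, a i / (∑ j, a j) = 1 / ((2 : ℝ) ^ m - 1)) := by
  have hexp := pairwise_eq_of_PsiM_mulVec_pairwise_eq m (by rwa [bVec_eq_PsiM_mulVec] at hconst)
  have hΨa : ∀ i j, (PsiM m *ᵥ a) i = (PsiM m *ᵥ a) j :=
    fun i j => neg_injective (Real.exp_injective (hexp i j))
  have ha := pairwise_eq_of_PsiM_mulVec_pairwise_eq m hΨa
  refine ⟨?_, fun i => ?_⟩
  · rcases isEmpty_or_nonempty (Fin (2 ^ m - 1)) with _ | ⟨⟨i₀⟩⟩
    · exact ⟨0, isEmptyElim⟩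
    · exact ⟨a i₀, fun i => ha i i₀⟩
  · rw [div_sum_of_pairwise_eq ha i (hpos i).ne', card_fin_two_pow_sub_one]

/-- NC is the only full-rank stable direction.
For `a ∈ ℝ^{K−1}` with all entries positive, if the vector `b(a)` is constant
(equivalently `Ψ·exp(−Ψa) ∝ 1`), then `a ∝ 1`; hence the normalized vector is the
uniform vector `â = (1/(K−1))·1`. -/
theorem full_rank_stable_direction_is_uniform (m : ℕ) (hm : 1 ≤ m)
    (a : Fin (2 ^ m - 1) → ℝ) (hpos : ∀ i, 0 < a i)
    (hconst : ∀ i j, bVec m a i = bVec m a j) :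
    (∃ c : ℝ, ∀ i, a i = c) ∧
    (∀ i, a i / (∑ j, a j) = 1 / ((2 : ℝ) ^ m - 1)) :=
  full_rank_stable_direction_is_uniform_general m a hpos hconst
end
end
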